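/- An element A of the gossip monoid G_n is idempotent if and only if the relation i ~ j ⟺ a_{i,j} = 1 is an equivalence relation on {1,…,n}. -/

import Mathlib

/-!
Every call matrix is reflexive and symmetric, so a gossip product `A = C₁ ⋯ C_k` is reflexive
and dominates each of its factors. Over a reflexive matrix, idempotence is exactly transitivity.
For symmetry, `A i j = 1` is witnessed by a walk from `i` to `j` whose steps are calls; walking
it backwards uses the same (symmetric) calls, each bounded by `A`, so transitivity gives `A j i = 1`.
-/

namespace Gossip

variable {n : ℕ}

/-- Boolean matrix multiplication over the semiring ({0,1}, max, min). -/
def bmul (A B : Matrix (Fin n) (Fin n) Bool) : Matrix (Fin n) (Fin n) Bool :=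
  fun i j => decide (∃ k, A i k = true ∧ B k j = true)

/-- The identity boolean matrix. -/
def idm : Matrix (Fin n) (Fin n) Bool := fun a b => decide (a = b)

/-- The call matrix C[i,j]. -/
def call (i j : Fin n) : Matrix (Fin n) (Fin n) Bool :=
  fun a b => decide (a = b ∨ (a = i ∧ b = j) ∨ (a = j ∧ b = i))

/-- Product of a list of boolean matrices (empty product is the identity). -/
def prodList : List (Matrix (Fin n) (Fin n) Bool) → Matrix (Fin n) (Fin n) Bool
  | [] => idm
  | M :: L => bmul M (prodList L)

/-- Membership in the gossip monoid `G_n`: a product of call matrices. -/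
def InGossip (A : Matrix (Fin n) (Fin n) Bool) : Prop :=
  ∃ L : List (Fin n × Fin n), (∀ p ∈ L, p.1 ≠ p.2) ∧
    A = prodList (L.map fun p => call p.1 p.2)

@[simp]
lemma bmul_apply_eq_true {A B : Matrix (Fin n) (Fin n) Bool} {i j : Fin n} :
    bmul A B i j = true ↔ ∃ k, A i k = true ∧ B k j = true := by
  simp [bmul]

lemma bmul_self_eq_self_iff {A : Matrix (Fin n) (Fin n) Bool} (hA : ∀ i, A i i = true) :
    bmul A A = A ↔ ∀ ⦃i j k⦄, A i j = true → A j k = true → A i k = true := by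
  constructor
  · intro h i j k hij hjk
    rw [← h]
    exact bmul_apply_eq_true.2 ⟨j, hij, hjk⟩
  · intro h
    funext i j
    rw [Bool.eq_iff_iff, bmul_apply_eq_true]
    exact ⟨fun ⟨_, hik, hkj⟩ => h hik hkj, fun hij => ⟨i, hA i, hij⟩⟩

lemma call_apply_self (i j a : Fin n) : call i j a a = true := by
  simp [call]

lemma call_symm {i j a b : Fin n} (h : call i j a b = true) : call i j b a = true := by
  simp only [call, decide_eq_true_eq] at h ⊢
  tauto

section prodList

variable {Ms : List (Matrix (Fin n) (Fin n) Bool)}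

lemma prodList_apply_self (hMs : ∀ M ∈ Ms, ∀ a, M a a = true) (a : Fin n) :
    prodList Ms a a = true := by
  induction Ms with
  | nil => simp [prodList, idm]
  | cons M Ms ih =>
    rw [List.forall_mem_cons] at hMs
    exact bmul_apply_eq_true.2 ⟨a, hMs.1 a, ih hMs.2⟩

lemma prodList_apply_of_mem (hMs : ∀ M ∈ Ms, ∀ a, M a a = true)
    {M : Matrix (Fin n) (Fin n) Bool} (hM : M ∈ Ms) {a b : Fin n} (h : M a b = true) :
    prodList Ms a b = true := by
  induction Ms with
  | nil => simp at hM
  | cons N Ms ih =>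
    rw [List.forall_mem_cons] at hMs
    rcases List.mem_cons.1 hM with rfl | hM
    · exact bmul_apply_eq_true.2 ⟨b, h, prodList_apply_self hMs.2 b⟩
    · exact bmul_apply_eq_true.2 ⟨a, hMs.1 a, ih hMs.2 hM⟩

lemma rel_swap_of_prodList_apply {R : Fin n → Fin n → Prop} (hrefl : ∀ a, R a a)
    (htrans : ∀ ⦃a b c⦄, R a b → R b c → R a c)
    (hMs : ∀ M ∈ Ms, ∀ a b, M a b = true → R b a) {i j : Fin n}
    (h : prodList Ms i j = true) : R j i := by
  induction Ms generalizing i with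
  | nil =>
    obtain rfl : i = j := by simpa [prodList, idm] using h
    exact hrefl i
  | cons M Ms ih =>
    rw [List.forall_mem_cons] at hMs
    obtain ⟨k, hik, hkj⟩ := bmul_apply_eq_true.1 h
    exact htrans (ih hMs.2 hkj) (hMs.1 i k hik)

end prodList

theorem stmt_12 (A : Matrix (Fin n) (Fin n) Bool) (hA : InGossip A) :
    bmul A A = A ↔ Equivalence (fun i j => A i j = true) := by
  obtain ⟨L, -, rfl⟩ := hA
  set Ms := L.map fun p => call p.1 p.2
  have hMs : ∀ M ∈ Ms, ∀ a, M a a = true := by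
    simp only [Ms, List.forall_mem_map]
    exact fun p _ => call_apply_self p.1 p.2
  have hrefl := prodList_apply_self hMs
  rw [bmul_self_eq_self_iff hrefl]
  refine ⟨fun htrans => ⟨hrefl, fun hij => ?_, fun hij hjk => htrans hij hjk⟩,
    fun h _ _ _ => h.trans⟩
  refine rel_swap_of_prodList_apply hrefl htrans ?_ hij
  simp only [Ms, List.forall_mem_map]
  exact fun p hp a b hab => prodList_apply_of_mem hMs (List.mem_map_of_mem hp) (call_symm hab)

end Gossip
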